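/- arXiv:2210.11350 — 3 statements merged into one kernel-verified Lean document; each statement's English description precedes it below -/
import Mathlib

section
/- There exist functions φ_k : [0,1) → ℝ (k = 1,…,K) such that the map (x_1,…,x_K) ↦ ∑_{k=1}^K φ_k(x_k) from [0,1)^K to ℝ is injective. (The functions can be constructed by interleaving binary digit expansions.) -/
open Cardinal

theorem buck_injective_sum (K : ℕ) (hK : 2 ≤ K) :
    ∃ φ : Fin K → (Set.Ico (0:ℝ) 1 → ℝ),
      Function.Injective (fun x : Fin K → Set.Ico (0:ℝ) 1 => ∑ k, φ k (x k)) := by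
  have hrank : Module.rank ℚ (Fin K → ℝ) = Module.rank ℚ ℝ := by
    rw [rank_fun, Real.rank_rat_real, Fintype.card_fin]
    rw [Cardinal.mul_eq_right (Cardinal.aleph0_le_continuum)]
    · exact_mod_cast Cardinal.nat_lt_continuum K |>.le
    · simp; omega
  obtain ⟨e⟩ := LinearEquiv.nonempty_equiv_iff_rank_eq.mpr hrank
  refine ⟨fun k x => e (Pi.single k (x : ℝ)), fun x y h => ?_⟩
  simp only at h
  have hx : ∀ x : Fin K → Set.Ico (0:ℝ) 1,
      (∑ k, e (Pi.single k ((x k : ℝ)))) = e (fun k => (x k : ℝ)) := by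
    intro x
    rw [← map_sum]
    congr 1
    ext j
    simp [Finset.sum_apply, Pi.single_apply]
  rw [hx x, hx y] at h
  have := e.injective h
  funext k
  exact Subtype.ext (congrFun this k)
end

section
/- Every function f : [0,1)^K → ℝ is nomographic: there exist functions φ_1,…,φ_K : [0,1) → ℝ and ψ : ℝ → ℝ such that f(x_1,…,x_K) = ψ(∑_{k=1}^K φ_k(x_k)) for all (x_1,…,x_K) ∈ [0,1)^K. -/
open Cardinal

theorem buck_every_function_nomographic (K : ℕ) (hK : 2 ≤ K)
    (f : (Fin K → Set.Ico (0:ℝ) 1) → ℝ) :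
    ∃ (φ : Fin K → (Set.Ico (0:ℝ) 1 → ℝ)) (ψ : ℝ → ℝ),
      ∀ x : Fin K → Set.Ico (0:ℝ) 1, f x = ψ (∑ k, φ k (x k)) := by
  have hrank : Module.rank ℚ (Fin K → ℝ) = Module.rank ℚ ℝ := by
    rw [rank_fun, Real.rank_rat_real, Fintype.card_fin]
    refine Cardinal.mul_eq_right Cardinal.aleph0_le_continuum
      (Cardinal.nat_lt_continuum K).le ?_
    exact_mod_cast (Nat.pos_of_ne_zero (by omega)).ne'
  obtain ⟨e⟩ : Nonempty ((Fin K → ℝ) ≃ₗ[ℚ] ℝ) :=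
    LinearEquiv.nonempty_equiv_iff_rank_eq.2 hrank
  set S : (Fin K → Set.Ico (0:ℝ) 1) → ℝ := fun x => e (fun k => ((x k : ℝ))) with hS
  have hSinj : Function.Injective S := by
    intro a b hab
    have hv := e.injective hab
    funext k
    exact Subtype.ext (congrFun hv k)
  refine ⟨fun k x => e (Pi.single k (x : ℝ)), Function.extend S f 0, fun x => ?_⟩
  have hsum : (∑ k, e (Pi.single k ((x k : ℝ)))) = S x := by
    rw [hS, ← map_sum]
    congr 1
    simp [Finset.univ_sum_single]
  rw [hsum, hSinj.extend_apply]
end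

section
/- The two-variable geometric mean f(x,y) = √(xy) on [0,1]² cannot be represented as f(x,y) = ψ(φ₁(x) + φ₂(y)) with φ₁, φ₂ : [0,1] → ℝ and ψ : ℝ → ℝ all continuous. -/
theorem geometric_mean_not_continuous_nomographic :
    ¬ ∃ (φ₁ φ₂ : ℝ → ℝ) (ψ : ℝ → ℝ),
      ContinuousOn φ₁ (Set.Icc 0 1) ∧ ContinuousOn φ₂ (Set.Icc 0 1) ∧ Continuous ψ ∧
      ∀ x ∈ Set.Icc (0:ℝ) 1, ∀ y ∈ Set.Icc (0:ℝ) 1,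
        Real.sqrt (x * y) = ψ (φ₁ x + φ₂ y) := by
  rintro ⟨φ₁, φ₂, ψ, h1, h2, hψ, hf⟩
  have hI : Set.uIcc (0:ℝ) 1 = Set.Icc 0 1 := Set.uIcc_of_le zero_le_one
  have h01 : (0:ℝ) ∈ Set.Icc (0:ℝ) 1 := Set.mem_Icc.2 ⟨le_refl 0, zero_le_one⟩
  have h11 : (1:ℝ) ∈ Set.Icc (0:ℝ) 1 := Set.mem_Icc.2 ⟨zero_le_one, le_refl 1⟩
  set a := φ₁ 0 + φ₂ 0 with ha
  set p := φ₁ 1 - φ₁ 0 with hp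
  set q := φ₂ 1 - φ₂ 0 with hq
  set r := (p + q) / 2 with hr
  have hψa : ψ a = 0 := by
    have := hf 0 h01 0 h01
    rw [← this]; simp
  have hψd : ψ (a + p + q) = 1 := by
    have := hf 1 h11 1 h11
    have e : φ₁ 1 + φ₂ 1 = a + p + q := by ring
    rw [e] at this
    rw [← this]; simp
  have hpq : p + q ≠ 0 := by
    intro h
    rw [show a + p + q = a by linarith] at hψd
    rw [hψa] at hψd
    exact one_ne_zero hψd.symm
  -- ψ vanishes on the interval between a and a+p
  have hH : ∀ s ∈ Set.uIcc a (a + p), ψ s = 0 := by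
    intro s hs
    have hc : ContinuousOn (fun x => φ₁ x + φ₂ 0) (Set.uIcc (0:ℝ) 1) := by
      rw [hI]; exact h1.add continuousOn_const
    have hs' : s ∈ (fun x => φ₁ x + φ₂ 0) '' Set.uIcc (0:ℝ) 1 := by
      apply intermediate_value_uIcc hc
      simpa [show φ₁ 1 + φ₂ 0 = a + p by ring] using hs
    obtain ⟨t, ht, hts⟩ := hs'
    rw [hI] at ht
    have := hf t ht 0 h01
    simp only [hts] at this
    rw [← this]; simp
  -- ψ vanishes on the interval between a and a+q
  have hK : ∀ s ∈ Set.uIcc a (a + q), ψ s = 0 := by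
    intro s hs
    have hc : ContinuousOn (fun y => φ₁ 0 + φ₂ y) (Set.uIcc (0:ℝ) 1) := by
      rw [hI]; exact continuousOn_const.add h2
    have hs' : s ∈ (fun y => φ₁ 0 + φ₂ y) '' Set.uIcc (0:ℝ) 1 := by
      apply intermediate_value_uIcc hc
      simpa [show φ₁ 0 + φ₂ 1 = a + q by ring] using hs
    obtain ⟨t, ht, hts⟩ := hs'
    rw [hI] at ht
    have := hf 0 h01 t ht
    simp only [hts] at this
    rw [← this]; simp
  -- ψ (a + r) = 0 since r is between p and q (in the union of the two intervals)
  have hψr : ψ (a + r) = 0 := by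
    rcases le_total p q with hle | hle
    · rcases le_total r 0 with h0 | h0
      · apply hH
        rw [Set.mem_uIcc]
        right
        constructor <;> [skip; linarith]
        have : p ≤ r := by rw [hr]; linarith
        linarith
      · apply hK
        rw [Set.mem_uIcc]
        left
        constructor <;> [linarith; skip]
        have : r ≤ q := by rw [hr]; linarith
        linarith
    · rcases le_total r 0 with h0 | h0
      · apply hK
        rw [Set.mem_uIcc]
        right
        constructor <;> [skip; linarith]
        have : q ≤ r := by rw [hr]; linarith
        linarith
      · apply hH
        rw [Set.mem_uIcc]
        left
        constructor <;> [linarith; skip]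
        have : r ≤ p := by rw [hr]; linarith
        linarith
  -- a + r is attained along the diagonal t ↦ φ₁ t + φ₂ t
  have hG : ∃ t ∈ Set.Icc (0:ℝ) 1, φ₁ t + φ₂ t = a + r := by
    have hc : ContinuousOn (fun t => φ₁ t + φ₂ t) (Set.uIcc (0:ℝ) 1) := by
      rw [hI]; exact h1.add h2
    have hmem : a + r ∈ Set.uIcc ((fun t => φ₁ t + φ₂ t) 0) ((fun t => φ₁ t + φ₂ t) 1) := by
      simp only
      rw [show φ₁ 1 + φ₂ 1 = a + (p + q) by ring, show φ₁ 0 + φ₂ 0 = a from ha.symm,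
        Set.mem_uIcc]
      rcases le_total 0 (p + q) with h0 | h0
      · left; constructor <;> [linarith [hr]; skip]
        rw [hr]; linarith
      · right; constructor <;> [skip; linarith [hr]]
        rw [hr]; linarith
    obtain ⟨t, ht, hts⟩ := intermediate_value_uIcc hc hmem
    rw [hI] at ht
    exact ⟨t, ht, hts⟩
  obtain ⟨t, ht, hts⟩ := hG
  have hψt : ψ (φ₁ t + φ₂ t) = t := by
    rw [← hf t ht t ht, Real.sqrt_mul_self ht.1]
  rw [hts, hψr] at hψt
  -- t = 0, so a + r = φ₁ 0 + φ₂ 0 = a, so r = 0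
  rw [← hψt] at hts
  have : r = 0 := by
    have : a = a + r := by rw [← hts]
    linarith
  rw [hr] at this
  exact hpq (by linarith)
end
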